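/- arXiv:2512.22807 — 3 statements merged into one kernel-verified Lean document; each statement's English description precedes it below -/
import Mathlib

section
/- Let A, B be positive definite matrices, k, t ∈ (0,1), and L = 1+2t-4kt. Then A^{-L} # F_{k,t}(A,B) = (A^{-1} #_k B)^t, where # denotes the (unweighted, t=1/2) geometric mean. -/
open scoped NNReal ComplexOrder
set_option synthInstance.maxHeartbeats 1000000
set_option maxHeartbeats 1000000

noncomputable section

/-- Real power of a square complex matrix, defined via the continuous functional
calculus on the corresponding operator on Euclidean space. -/
def mpow {n : ℕ} (A : Matrix (Fin n) (Fin n) ℂ) (r : ℝ) : Matrix (Fin n) (Fin n) ℂ :=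
  (Matrix.toEuclideanCLM (𝕜 := ℂ)).symm ((Matrix.toEuclideanCLM (𝕜 := ℂ) A) ^ r)

/-- The weighted geometric mean `X #_k Y = X^{1/2} (X^{-1/2} Y X^{-1/2})^k X^{1/2}`. -/
def wgm {n : ℕ} (k : ℝ) (X Y : Matrix (Fin n) (Fin n) ℂ) : Matrix (Fin n) (Fin n) ℂ :=
  mpow X (1/2) * mpow (mpow X (-(1/2)) * Y * mpow X (-(1/2))) k * mpow X (1/2)

/-- The (k,t)-spectral geometric mean
`F_{k,t}(A,B) = (A⁻¹ #_k B)^t A^{1+2t-4kt} (A⁻¹ #_k B)^t`. -/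
def F {n : ℕ} (k t : ℝ) (A B : Matrix (Fin n) (Fin n) ℂ) : Matrix (Fin n) (Fin n) ℂ :=
  mpow (wgm k A⁻¹ B) t * mpow A (1 + 2*t - 4*k*t) * mpow (wgm k A⁻¹ B) t

end

section Gen

set_option linter.unusedSectionVars false

variable {A' : Type*} [PartialOrder A'] [NormedRing A'] [StarRing A'] [StarOrderedRing A']
  [NormedAlgebra ℝ A'] [ContinuousFunctionalCalculus ℝ A' IsSelfAdjoint]
  [NonnegSpectrumClass ℝ A']

lemma rpow_rpow' (a : A') (ha : 0 ≤ a) (hu : IsUnit a) (x y : ℝ) :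
    (a ^ x) ^ y = a ^ (x * y) := by
  by_cases hx : x = 0
  · subst hx
    rw [CFC.rpow_zero a ha, zero_mul, CFC.rpow_zero a ha, CFC.one_rpow]
  · exact CFC.rpow_rpow a x y hx (hu.isStrictlyPositive ha)

lemma key (a m : A') (ha : 0 ≤ a) (hu : IsUnit a) (hm : 0 ≤ m) (L : ℝ) :
    (a ^ (-L)) ^ ((1:ℝ)/2) *
      ((a ^ (-L)) ^ (-((1:ℝ)/2)) * (m * a ^ L * m) * (a ^ (-L)) ^ (-((1:ℝ)/2))) ^ ((1:ℝ)/2) *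
      (a ^ (-L)) ^ ((1:ℝ)/2) = m := by
  have hspec : (0 : ℝ≥0) ∉ spectrum ℝ≥0 a := spectrum.zero_notMem ℝ≥0 hu
  have h1 : (a ^ (-L)) ^ ((1:ℝ)/2) = a ^ (-(L/2)) := by
    rw [rpow_rpow' a ha hu]; ring_nf
  have h2 : (a ^ (-L)) ^ (-((1:ℝ)/2)) = a ^ (L/2) := by
    rw [rpow_rpow' a ha hu]; ring_nf
  have hL : a ^ L = a ^ (L/2) * a ^ (L/2) := by
    rw [← CFC.rpow_add hu]; ring_nf
  have hsa : star (a ^ (L/2)) = a ^ (L/2) :=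
    (IsSelfAdjoint.of_nonneg CFC.rpow_nonneg)
  have hc : (0 : A') ≤ a ^ (L/2) * m * a ^ (L/2) := by
    have := star_left_conjugate_nonneg hm (a ^ (L/2))
    rwa [hsa] at this
  rw [h1, h2, hL]
  have hinner : a ^ (L/2) * (m * (a ^ (L/2) * a ^ (L/2)) * m) * a ^ (L/2)
      = (a ^ (L/2) * m * a ^ (L/2)) * (a ^ (L/2) * m * a ^ (L/2)) := by
    noncomm_ring
  rw [hinner, ← CFC.sqrt_eq_rpow, CFC.sqrt_mul_self _ hc]
  have hcancel : a ^ (-(L/2)) * a ^ (L/2) = 1 := CFC.rpow_neg_mul_rpow _ (hu.isStrictlyPositive ha)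
  have hcancel' : a ^ (L/2) * a ^ (-(L/2)) = 1 := CFC.rpow_mul_rpow_neg _ (hu.isStrictlyPositive ha)
  calc a ^ (-(L/2)) * (a ^ (L/2) * m * a ^ (L/2)) * a ^ (-(L/2))
      = (a ^ (-(L/2)) * a ^ (L/2)) * m * (a ^ (L/2) * a ^ (-(L/2))) := by noncomm_ring
    _ = m := by rw [hcancel, hcancel', one_mul, mul_one]

end Gen

lemma toCLM_mpow {n : ℕ} (A : Matrix (Fin n) (Fin n) ℂ) (r : ℝ) :
    Matrix.toEuclideanCLM (𝕜 := ℂ) (mpow A r) = (Matrix.toEuclideanCLM (𝕜 := ℂ) A) ^ r := by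
  simp [mpow]

/-- `A^{-L} # F_{k,t}(A,B) = (A⁻¹ #_k B)^t` where `L = 1+2t-4kt` and `#` is the
(unweighted) geometric mean. -/
theorem stmt4 {n : ℕ} (A B : Matrix (Fin n) (Fin n) ℂ) (hA : A.PosDef) (hB : B.PosDef)
    (k t : ℝ) (hk : k ∈ Set.Ioo (0:ℝ) 1) (ht : t ∈ Set.Ioo (0:ℝ) 1) :
    wgm (1/2) (mpow A (-(1 + 2*t - 4*k*t))) (F k t A B) = mpow (wgm k A⁻¹ B) t := by
  have ha : (0 : EuclideanSpace ℂ (Fin n) →L[ℂ] EuclideanSpace ℂ (Fin n))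
      ≤ Matrix.toEuclideanCLM (𝕜 := ℂ) A := by
    obtain ⟨C, hC⟩ : ∃ C : Matrix (Fin n) (Fin n) ℂ, A = C.conjTranspose * C := by
      open scoped MatrixOrder in exact CStarAlgebra.nonneg_iff_eq_star_mul_self.mp hA.posSemidef.nonneg
    rw [hC, map_mul]
    have hstar : Matrix.toEuclideanCLM (𝕜 := ℂ) (C.conjTranspose)
        = star (Matrix.toEuclideanCLM (𝕜 := ℂ) C) := map_star _ C
    rw [hstar]
    exact star_mul_self_nonneg _
  have hu : IsUnit (Matrix.toEuclideanCLM (𝕜 := ℂ) A) :=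
    hA.isUnit.map (Matrix.toEuclideanCLM (𝕜 := ℂ))
  have main : Matrix.toEuclideanCLM (𝕜 := ℂ)
        (wgm (1/2) (mpow A (-(1 + 2*t - 4*k*t))) (F k t A B))
      = Matrix.toEuclideanCLM (𝕜 := ℂ) (mpow (wgm k A⁻¹ B) t) := by
    simp only [wgm, F, map_mul, toCLM_mpow]
    exact key _ _ ha hu CFC.rpow_nonneg _
  exact (Matrix.toEuclideanCLM (𝕜 := ℂ)).injective main
end

section
/- For positive definite matrices A, B, there exists a unitary matrix U such that A # B = A^{1/2} U B^{1/2}, where A # B = A^{1/2}(A^{-1/2} B A^{-1/2})^{1/2} A^{1/2} is the geometric mean. Concretely, U = (A^{-1/2} B A^{-1/2})^{1/2} A^{1/2} B^{-1/2} is unitary and satisfies this identity. -/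
open scoped NNReal ComplexOrder
set_option synthInstance.maxHeartbeats 1000000
set_option maxHeartbeats 1000000

lemma posdef_clm {n : ℕ} {M : Matrix (Fin n) (Fin n) ℂ} (hM : M.PosDef) :
    0 ≤ Matrix.toEuclideanCLM (𝕜 := ℂ) M ∧
      0 ∉ spectrum ℝ≥0 (Matrix.toEuclideanCLM (𝕜 := ℂ) M) := by
  set φ := Matrix.toEuclideanCLM (𝕜 := ℂ) (n := Fin n)
  have hsa : IsSelfAdjoint (φ M) := by
    rw [IsSelfAdjoint, ← map_star]
    congr 1
    exact hM.isHermitian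
  refine ⟨?_, spectrum.zero_notMem ℝ≥0 (hM.isUnit.map φ)⟩
  rw [ContinuousLinearMap.nonneg_iff_isPositive]
  refine ⟨ContinuousLinearMap.isSelfAdjoint_iff_isSymmetric.mp hsa, fun x => ?_⟩
  have h1 : (φ M).reApplyInnerSelf x = RCLike.re (inner ℂ x ((φ M) x) : ℂ) := by
    rw [ContinuousLinearMap.reApplyInnerSelf]
    exact inner_re_symm _ _
  rw [h1, EuclideanSpace.inner_eq_star_dotProduct, Matrix.ofLp_toEuclideanCLM, dotProduct_comm]
  exact hM.posSemidef.re_dotProduct_nonneg _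


lemma aux_cancel {M : Type*} [Monoid M] {p q r s t c : M} (hpq : p * q = 1) (hqp : q * p = 1)
    (hrs : r * s = 1) (hsr : s * r = 1) (ht : t = r * r) (hcc : c * c = q * t * q) :
    (s * p * c) * (c * p * s) = 1 := by
  have h1 : q * (p * s) = s := by rw [← mul_assoc, hqp, one_mul]
  calc (s * p * c) * (c * p * s) = s * (p * ((c * c) * (p * s))) := by simp only [mul_assoc]
    _ = s * (p * (q * (r * (r * (q * (p * s)))))) := by rw [hcc, ht]; simp only [mul_assoc]
    _ = 1 := by rw [h1, hrs, mul_one, ← mul_assoc p q r, hpq, one_mul, hsr]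

/-- `A # B = A^{1/2} U B^{1/2}` with the concrete unitary
`U = (A^{-1/2} B A^{-1/2})^{1/2} A^{1/2} B^{-1/2}`. -/
theorem stmt6 {n : ℕ} (A B : Matrix (Fin n) (Fin n) ℂ) (hA : A.PosDef) (hB : B.PosDef)
    (U : Matrix (Fin n) (Fin n) ℂ)
    (hU : U = mpow (mpow A (-(1/2)) * B * mpow A (-(1/2))) (1/2) * mpow A (1/2) * mpow B (-(1/2))) :
    U ∈ Matrix.unitaryGroup (Fin n) ℂ ∧
    wgm (1/2) A B = mpow A (1/2) * U * mpow B (1/2) := by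
  set φ := Matrix.toEuclideanCLM (𝕜 := ℂ) (n := Fin n) with hφ
  set a := φ A with ha'
  set b := φ B with hb'
  obtain ⟨ha, has⟩ := posdef_clm hA
  obtain ⟨hb, hbs⟩ := posdef_clm hB
  have hap : IsStrictlyPositive a := (hA.isUnit.map φ).isStrictlyPositive ha
  have hbp : IsStrictlyPositive b := (hB.isUnit.map φ).isStrictlyPositive hb
  have hmp : ∀ (X : Matrix (Fin n) (Fin n) ℂ) (r : ℝ), φ (mpow X r) = (φ X) ^ r := by
    intro X r
    simp [mpow, φ]
  -- the conjugated element m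
  set m := a ^ (-(1/2) : ℝ) * b * a ^ (-(1/2) : ℝ) with hm'
  have hφM : φ (mpow A (-(1/2)) * B * mpow A (-(1/2))) = m := by
    simp [map_mul, hmp, hm', ← ha', ← hb']
  have hm : 0 ≤ m := by
    have h := star_left_conjugate_nonneg hb (a ^ (-(1/2) : ℝ))
    rwa [IsSelfAdjoint.of_nonneg CFC.rpow_nonneg] at h
  have hmu : IsUnit m := by
    have h1 : IsUnit (a ^ (-(1/2) : ℝ)) :=
      ⟨⟨a ^ (-(1/2) : ℝ), a ^ ((1/2) : ℝ), CFC.rpow_neg_mul_rpow (1/2) hap,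
        CFC.rpow_mul_rpow_neg (1/2) hap⟩, rfl⟩
    exact (h1.mul (hB.isUnit.map φ)).mul h1
  have hms : 0 ∉ spectrum ℝ≥0 m := spectrum.zero_notMem ℝ≥0 hmu
  -- star of U on CLM side
  have hUs : φ U = m ^ (1/2 : ℝ) * a ^ (1/2 : ℝ) * b ^ (-(1/2) : ℝ) := by
    simp only [hU, map_mul, hmp, hφM, ← ha', ← hb']
  have hstar : star (φ U) = b ^ (-(1/2) : ℝ) * a ^ (1/2 : ℝ) * m ^ (1/2 : ℝ) := by
    rw [hUs]
    simp only [star_mul]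
    rw [IsSelfAdjoint.of_nonneg CFC.rpow_nonneg, IsSelfAdjoint.of_nonneg CFC.rpow_nonneg,
      IsSelfAdjoint.of_nonneg CFC.rpow_nonneg]
    simp only [mul_assoc]
  have hmm : m ^ (1/2 : ℝ) * m ^ (1/2 : ℝ) = m := by
    rw [← CFC.rpow_add hmu]
    norm_num
    exact CFC.rpow_one m hm
  have hbb : b ^ (-(1/2) : ℝ) * b ^ ((1/2) : ℝ) = 1 := CFC.rpow_neg_mul_rpow (1/2) hbp
  have hbb' : b ^ ((1/2) : ℝ) * b ^ (-(1/2) : ℝ) = 1 := CFC.rpow_mul_rpow_neg (1/2) hbp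
  have hb2 : b ^ ((1/2) : ℝ) * b ^ ((1/2) : ℝ) = b := by
    rw [← CFC.rpow_add (hB.isUnit.map φ)]
    norm_num
    exact CFC.rpow_one b hb
  have haa : a ^ ((1/2) : ℝ) * a ^ (-(1/2) : ℝ) = 1 := CFC.rpow_mul_rpow_neg (1/2) hap
  have hkey : star (φ U) * φ U = 1 := by
    rw [hstar, hUs]
    exact aux_cancel haa (CFC.rpow_neg_mul_rpow (1/2) hap) hbb' hbb hb2.symm (hmm.trans hm')
  have hUU : star U * U = 1 := by
    have h2 : φ (star U * U) = φ 1 := by rw [map_mul φ, map_star φ, map_one φ, hkey]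
    exact φ.injective h2
  refine ⟨Matrix.mem_unitaryGroup_iff'.mpr hUU, ?_⟩
  have h3 : φ (wgm (1/2) A B) = φ (mpow A (1/2) * U * mpow B (1/2)) := by
    rw [wgm]
    simp only [map_mul φ, hmp, hφM, hUs]
    simp only [mul_assoc, hbb, mul_one]
    simp only [← ha', ← hb', hm', mul_assoc, hbb, mul_one]
  exact φ.injective h3
end

section
/- For real numbers x, y > 0 and k ∈ (0,1), the weighted geometric mean of the 2×2 matrices A = [[x+y, y-x],[y-x, x+y]] and B = [[1,0],[0,0]] satisfies A #_k B = (4xy/(x+y))^{1-k} · B, where A #_k B := lim_{ε→0} A^{1/2}(A^{-1/2}(B+εI)A^{-1/2})^k A^{1/2}, equivalently A #_k B = A^{1/2}(A^{-1/2} B A^{-1/2})^k A^{1/2} interpreted via functional calculus on the positive semidefinite matrix A^{-1/2} B A^{-1/2}. -/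
open scoped NNReal
set_option synthInstance.maxHeartbeats 1000000
set_option maxHeartbeats 1000000

section Aux

noncomputable abbrev EA : Type := EuclideanSpace ℂ (Fin 2) →L[ℂ] EuclideanSpace ℂ (Fin 2)

lemma aux_smul (r : ℝ) (v : EA) : r • v = ((r : ℂ)) • v := (Complex.coe_smul r v).symm

lemma aux_spec (a : EA) (c : ℝ) (hm : a * a = c • a) (t : ℝ) (ht : t ∈ spectrum ℝ a) :
    t = 0 ∨ t = c := by
  have hz : Polynomial.aeval a (Polynomial.X^2 - (Polynomial.C c) * Polynomial.X) = 0 := by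
    simp [sq, hm]; rw [← Algebra.smul_def]; simp
  have key := spectrum.subset_polynomial_aeval a
    (Polynomial.X^2 - (Polynomial.C c) * Polynomial.X) ⟨t, ht, rfl⟩
  rw [hz, spectrum.zero_eq] at key
  simp at key
  have h2 : t * (t - c) = 0 := by ring_nf; ring_nf at key; linarith
  rcases mul_eq_zero.mp h2 with h | h
  · exact Or.inl h
  · exact Or.inr (by linarith [sub_eq_zero.mp h])

lemma aux_rpow (m : EA) (k c : ℝ) (hm : 0 ≤ m) (hσ : ∀ t ∈ spectrum ℝ m, t = 0 ∨ t = c)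
    (hc : 0 < c) (hk : 0 < k) :
    m ^ k = (c ^ (k - 1) : ℝ) • m := by
  rw [CFC.rpow_def, cfc_nnreal_eq_real _ _ hm]
  have h1 : cfc (fun x : ℝ => ((x.toNNReal ^ k : ℝ≥0) : ℝ)) m
      = cfc (fun x : ℝ => c ^ (k-1) * x) m := by
    apply cfc_congr
    intro t ht
    rcases hσ t ht with h | h
    · simp [h, NNReal.rpow_eq_zero_iff, hk.ne']
    · subst h
      push_cast [Real.toNNReal_of_nonneg hc.le]
      rw [show k = (k-1)+1 by ring, Real.rpow_add hc, Real.rpow_one]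
      ring_nf
  rw [h1, cfc_const_mul_id _ _ (IsSelfAdjoint.of_nonneg hm)]

end Aux

open Matrix in
/-- For `A = [[x+y, y-x],[y-x, x+y]]` and `B = [[1,0],[0,0]]`,
`A #_k B = (4xy/(x+y))^{1-k} • B`. -/
theorem stmt7 (x y k : ℝ) (hx : 0 < x) (hy : 0 < y) (hk : k ∈ Set.Ioo (0:ℝ) 1) :
    wgm k (!![((x+y : ℝ) : ℂ), ((y-x : ℝ) : ℂ); ((y-x : ℝ) : ℂ), ((x+y : ℝ) : ℂ)])
      (!![(1 : ℂ), 0; 0, 0])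
      = (((4*x*y/(x+y)) ^ (1-k) : ℝ) : ℂ) • !![(1 : ℂ), 0; 0, 0] := by
  obtain ⟨hk0, hk1⟩ := hk
  have hx0 : (x:ℂ) ≠ 0 := by exact_mod_cast hx.ne'
  have hy0 : (y:ℂ) ≠ 0 := by exact_mod_cast hy.ne'
  set A : Matrix (Fin 2) (Fin 2) ℂ :=
    !![((x+y : ℝ) : ℂ), ((y-x : ℝ) : ℂ); ((y-x : ℝ) : ℂ), ((x+y : ℝ) : ℂ)] with hAdef
  set B : Matrix (Fin 2) (Fin 2) ℂ := !![(1 : ℂ), 0; 0, 0] with hBdef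
  set J : Matrix (Fin 2) (Fin 2) ℂ :=
    ((4*x*y : ℝ) : ℂ)⁻¹ • !![((x+y : ℝ) : ℂ), ((x-y : ℝ) : ℂ); ((x-y : ℝ) : ℂ), ((x+y : ℝ) : ℂ)]
    with hJdef
  set φ := Matrix.toEuclideanCLM (𝕜 := ℂ) (n := Fin 2) with hφdef
  set a : EA := φ A with hadef
  set b : EA := φ B with hbdef
  -- A is positive semidefinite
  have hAfact : A = (!![((Real.sqrt x : ℝ) : ℂ), -((Real.sqrt x : ℝ) : ℂ);
      ((Real.sqrt y : ℝ) : ℂ), ((Real.sqrt y : ℝ) : ℂ)])ᴴ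
        * (!![((Real.sqrt x : ℝ) : ℂ), -((Real.sqrt x : ℝ) : ℂ);
      ((Real.sqrt y : ℝ) : ℂ), ((Real.sqrt y : ℝ) : ℂ)]) := by
    ext i j
    fin_cases i <;> fin_cases j <;>
      simp [hAdef, Matrix.mul_apply, Fin.sum_univ_two, Matrix.conjTranspose_apply,
        ← Complex.ofReal_mul, Real.mul_self_sqrt hx.le, Real.mul_self_sqrt hy.le] <;>
      push_cast <;> ring
  have ha : (0 : EA) ≤ a := by
    rw [hadef, hAfact, _root_.map_mul, ← Matrix.star_eq_conjTranspose, StarHomClass.map_star]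
    exact star_mul_self_nonneg _
  -- B is a projection
  have hBB : B * B = B := by
    ext i j; fin_cases i <;> fin_cases j <;> simp [hBdef, Matrix.mul_apply, Fin.sum_univ_two]
  have hBstar : star B = B := by
    ext i j; fin_cases i <;> fin_cases j <;>
      simp [hBdef, Matrix.star_eq_conjTranspose, Matrix.conjTranspose_apply]
  have hbb : b * b = b := by rw [hbdef, ← _root_.map_mul, hBB]
  have hbstar : star b = b := by rw [hbdef, ← StarHomClass.map_star, hBstar]
  -- J is the inverse of A
  have hAJ : A * J = 1 := by
    ext i j
    fin_cases i <;> fin_cases j <;>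
      · simp [hAdef, hJdef, Matrix.mul_apply, Fin.sum_univ_two, Matrix.one_apply]
        push_cast
        field_simp
        try ring
        try tauto
  have hJA : J * A = 1 := by
    ext i j
    fin_cases i <;> fin_cases j <;>
      · simp [hAdef, hJdef, Matrix.mul_apply, Fin.sum_univ_two, Matrix.one_apply]
        push_cast
        field_simp
        try ring
        try tauto
  set u : EAˣ := ⟨a, φ J, by rw [hadef, ← _root_.map_mul, hAJ, _root_.map_one],
    by rw [hadef, ← _root_.map_mul, hJA, _root_.map_one]⟩ with hudef
  have h0 : (0 : ℝ≥0) ∉ spectrum ℝ≥0 a := spectrum.zero_notMem ℝ≥0 u.isUnit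
  -- square roots
  set s : EA := a ^ ((1:ℝ)/2) with hsdef
  set si : EA := a ^ (-((1:ℝ)/2)) with hsidef
  have hssi : s * si = 1 := by
    rw [hsdef, hsidef, ← CFC.rpow_add (a := a) u.isUnit]
    norm_num
    exact CFC.rpow_zero a ha
  have hsis : si * s = 1 := by
    rw [hsdef, hsidef, ← CFC.rpow_add (a := a) u.isUnit]
    norm_num
    exact CFC.rpow_zero a ha
  have hsisi : si * si = φ J := by
    rw [hsidef, ← CFC.rpow_add (a := a) u.isUnit]
    norm_num
    have h := CFC.rpow_neg_one_eq_inv u ha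
    simpa [hudef] using h
  have hsistar : star si = si := IsSelfAdjoint.star_eq (IsSelfAdjoint.of_nonneg (R := EA) (x := si) CFC.rpow_nonneg)
  -- the middle element
  set m : EA := si * b * si with hmdef
  have hm : (0 : EA) ≤ m := by
    have e2 : (si * b) * (b * si) = si * (b * b) * si := by noncomm_ring
    have e : m = star (b * si) * (b * si) := by
      rw [StarMul.star_mul, hsistar, hbstar, e2, hbb, hmdef]
    rw [e]
    exact star_mul_self_nonneg _
  set c : ℝ := (x+y)/(4*x*y) with hcdef
  have hc : 0 < c := by rw [hcdef]; positivity
  have hBJB : B * J * B = ((c : ℝ) : ℂ) • B := by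
    ext i j
    fin_cases i <;> fin_cases j <;>
      · simp [hBdef, hJdef, hcdef, Matrix.mul_apply, Fin.sum_univ_two]
        try push_cast
        try field_simp
        try ring
        try tauto
  have hbJb : b * φ J * b = ((c : ℝ) : ℂ) • b := by
    rw [hbdef, ← _root_.map_mul, ← _root_.map_mul, hBJB, _root_.map_smul]
  have hmm : m * m = c • m := by
    have e1 : m * m = si * (b * (φ J) * b) * si := by
      rw [hmdef, ← hsisi]; noncomm_ring
    rw [e1, hbJb, mul_smul_comm, smul_mul_assoc, ← aux_smul, hmdef]
  have hσ : ∀ t ∈ spectrum ℝ m, t = 0 ∨ t = c := fun t ht => aux_spec m c hmm t ht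
  have hpow : m ^ k = (c ^ (k - 1) : ℝ) • m := aux_rpow m k c hm hσ hc hk0
  -- assemble
  have key : wgm k A B = φ.symm (s * (m ^ k) * s) := by
    rw [wgm]
    have h1 : mpow A (1/2) = φ.symm s := rfl
    have h2 : mpow A (-(1/2)) = φ.symm si := rfl
    have h3 : mpow (mpow A (-(1/2)) * B * mpow A (-(1/2))) k = φ.symm (m ^ k) := by
      rw [h2, mpow]
      congr 2
      rw [_root_.map_mul, _root_.map_mul, StarAlgEquiv.apply_symm_apply, ← hbdef, ← hmdef]
    rw [h1, h3, ← _root_.map_mul, ← _root_.map_mul]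
  have hsms : s * m * s = b := by
    rw [hmdef, show s * (si * b * si) * s = (s * si) * b * (si * s) by noncomm_ring,
      hssi, hsis, one_mul, mul_one]
  have key2 : s * (m ^ k) * s = (c ^ (k-1) : ℝ) • b := by
    rw [hpow, aux_smul, mul_smul_comm, smul_mul_assoc, ← aux_smul, hsms]
  have hcpow : (c ^ (k-1) : ℝ) = (4*x*y/(x+y)) ^ (1-k) := by
    have hd : (0:ℝ) < 4*x*y/(x+y) := by positivity
    rw [hcdef, show (x+y)/(4*x*y) = (4*x*y/(x+y))⁻¹ by rw [inv_div],
      ← Real.rpow_neg_one (4*x*y/(x+y)), ← Real.rpow_mul hd.le]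
    norm_num
  rw [key, key2, hcpow, aux_smul, _root_.map_smul, hbdef, StarAlgEquiv.symm_apply_apply]
end
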